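/- arXiv:2601.10991 — 9 statements merged into one kernel-verified Lean document; each statement's English description precedes it below -/
import Mathlib

section
/- The function f(a) = a + 1 - 2^a on the interval [0,1) satisfies 0 ≤ f(a) ≤ lg(lg e) + 1 - lg e, where lg denotes logarithm base 2 and e is Euler's number. The maximum is attained at a = lg(lg e). -/
/-!
The lower bound is Bernoulli's inequality `(1 + 1)^a ≤ 1 + a` for `0 ≤ a ≤ 1`.
For the upper bound, `x ↦ b^x` lies above its tangent at the point `c` where its slope
`b^c log b` equals `1`, namely `c = log_b (log_b e)`; that tangent is `x ↦ x - c + log_b e`.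
-/

open Real

namespace Real

variable {b : ℝ}

lemma rpow_logb_logb_exp_one (hb : 1 < b) : b ^ logb b (logb b (exp 1)) = logb b (exp 1) :=
  rpow_logb (by linarith) hb.ne' (logb_pos hb (one_lt_exp_iff.mpr one_pos))

lemma self_sub_rpow_le_logb_logb_exp_one_sub (hb : 1 < b) (x : ℝ) :
    x - b ^ x ≤ logb b (logb b (exp 1)) - logb b (exp 1) := by
  set c := logb b (logb b (exp 1))
  have hlog : 0 < log b := log_pos hb
  have hlogb_exp : logb b (exp 1) = (log b)⁻¹ := by rw [logb, log_exp, one_div]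
  have htangent : b ^ x ≥ logb b (exp 1) * (log b * (x - c) + 1) :=
    calc b ^ x = b ^ c * b ^ (x - c) := by rw [← rpow_add (by linarith), add_sub_cancel]
      _ = logb b (exp 1) * exp (log b * (x - c)) := by
        rw [rpow_logb_logb_exp_one hb, rpow_def_of_pos (by linarith)]
      _ ≥ logb b (exp 1) * (log b * (x - c) + 1) := by
        gcongr
        · rw [hlogb_exp]; positivity
        · exact add_one_le_exp _
  rw [hlogb_exp, mul_add, ← mul_assoc, inv_mul_cancel₀ hlog.ne', one_mul, mul_one] at htangent
  rw [hlogb_exp]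
  linarith

end Real

/-- The function `f a = a + 1 - 2^a` on `[0,1)` satisfies
`0 ≤ f a ≤ lg (lg e) + 1 - lg e`, with the maximum attained at `a = lg (lg e)`. -/
theorem stmt0 :
    (∀ a : ℝ, 0 ≤ a → a < 1 →
      0 ≤ a + 1 - (2:ℝ)^a ∧
      a + 1 - (2:ℝ)^a ≤ logb 2 (logb 2 (exp 1)) + 1 - logb 2 (exp 1)) ∧
    logb 2 (logb 2 (exp 1)) + 1 - (2:ℝ)^(logb 2 (logb 2 (exp 1)))
      = logb 2 (logb 2 (exp 1)) + 1 - logb 2 (exp 1) := by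
  refine ⟨fun a ha0 ha1 => ⟨?_, ?_⟩, by rw [rpow_logb_logb_exp_one one_lt_two]⟩
  · have hbernoulli : (2:ℝ) ^ a ≤ 1 + a := by
      simpa [one_add_one_eq_two] using
        rpow_one_add_le_one_add_mul_self (s := 1) (by norm_num) ha0 ha1.le
    linarith
  · linarith [self_sub_rpow_le_logb_logb_exp_one_sub one_lt_two a]
end

section
/- For every integer M ≥ 2, with k = ⌈lg M⌉, the quantity μ_pi(M) = k + 1 - 2^k/M - lg M satisfies 0 ≤ μ_pi(M) ≤ lg(lg e) + 1 - lg e. -/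
/-!
Write `x = lg M`, `k = ⌈x⌉` and `t = k - x ∈ [0, 1)`. Since `2^k / M = 2^t`, the redundancy is `t + 1 - 2^t`.
It is nonnegative because `2^t ≤ 1 + t` on `[0, 1]` (Bernoulli), and `t - 2^t` is maximal where
`2^t ln 2 = 1`, i.e. at `t = lg lg e`, where `2^t = lg e`.
-/

open Real

theorem rpow_natCast_div_eq_rpow_sub_logb {b y : ℝ} (hb : 0 < b) (hb1 : b ≠ 1) (hy : 0 < y)
    (n : ℕ) : b ^ n / y = b ^ ((n : ℝ) - logb b y) := by
  rw [rpow_sub hb, rpow_natCast, rpow_logb hb hb1 hy]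

theorem sub_rpow_le_logb_logb_exp_one_sub_logb_exp_one {b : ℝ} (hb : 1 < b) (t : ℝ) :
    t - b ^ t ≤ logb b (logb b (exp 1)) - logb b (exp 1) := by
  have hc : 0 < log b := log_pos hb
  have hlogb_e : logb b (exp 1) = (log b)⁻¹ := by rw [logb, log_exp, one_div]
  have htangent : log b * t + log (log b) + 1 ≤ log b * b ^ t := by
    calc log b * t + log (log b) + 1 ≤ exp (log b * t + log (log b)) := add_one_le_exp _
      _ = log b * b ^ t := by
        rw [exp_add, exp_log hc, rpow_def_of_pos (by linarith), mul_comm]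
  rw [hlogb_e, logb, log_inv]
  calc t - b ^ t = log b * (t - b ^ t) / log b := by field_simp
    _ ≤ (-log (log b) - 1) / log b := by gcongr; linarith
    _ = -log (log b) / log b - (log b)⁻¹ := by ring

/-- For every integer `M ≥ 2`, with `k = ⌈lg M⌉`, the redundancy
`μ_pi(M) = k + 1 - 2^k / M - lg M` satisfies `0 ≤ μ_pi(M) ≤ lg (lg e) + 1 - lg e`. -/
theorem stmt1 (M : ℕ) (hM : 2 ≤ M) :
    0 ≤ (⌈logb 2 (M:ℝ)⌉₊ : ℝ) + 1 - 2^(⌈logb 2 (M:ℝ)⌉₊) / (M:ℝ) - logb 2 (M:ℝ) ∧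
    (⌈logb 2 (M:ℝ)⌉₊ : ℝ) + 1 - 2^(⌈logb 2 (M:ℝ)⌉₊) / (M:ℝ) - logb 2 (M:ℝ)
      ≤ logb 2 (logb 2 (exp 1)) + 1 - logb 2 (exp 1) := by
  have hM_pos : (0 : ℝ) < M := by positivity
  have hx_nonneg : 0 ≤ logb 2 (M : ℝ) :=
    logb_nonneg one_lt_two (by exact_mod_cast (by omega : 1 ≤ M))
  rw [rpow_natCast_div_eq_rpow_sub_logb two_pos (by norm_num) hM_pos]
  set t := (⌈logb 2 (M : ℝ)⌉₊ : ℝ) - logb 2 (M : ℝ)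
  have ht0 : 0 ≤ t := sub_nonneg.2 (Nat.le_ceil _)
  have ht1 : t ≤ 1 := by linarith [Nat.ceil_lt_add_one hx_nonneg]
  have hbernoulli : (1 + 1 : ℝ) ^ t ≤ 1 + t * 1 :=
    rpow_one_add_le_one_add_mul_self (by norm_num) ht0 ht1
  have hmax := sub_rpow_le_logb_logb_exp_one_sub_logb_exp_one one_lt_two t
  norm_num at hbernoulli
  constructor <;> linarith
end

section
/- For every integer M ≥ 2, with k = ⌈lg M⌉, the average code length of the phased-in code under the uniform distribution, L = k + 1 - 2^k/M, satisfies lg M ≤ L ≤ lg M + σ, where σ = lg(lg e) + 1 - lg e. -/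
open Real

/-- For every integer `M ≥ 2`, with `k = ⌈lg M⌉`, the average code length of the
phased-in code under the uniform distribution, `L = k + 1 - 2^k/M`, satisfies
`lg M ≤ L ≤ lg M + σ` with `σ = lg (lg e) + 1 - lg e`. -/
theorem stmt2 (M : ℕ) (hM : 2 ≤ M) :
    logb 2 (M:ℝ) ≤ (⌈logb 2 (M:ℝ)⌉₊ : ℝ) + 1 - 2^(⌈logb 2 (M:ℝ)⌉₊) / (M:ℝ) ∧
    (⌈logb 2 (M:ℝ)⌉₊ : ℝ) + 1 - 2^(⌈logb 2 (M:ℝ)⌉₊) / (M:ℝ)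
      ≤ logb 2 (M:ℝ) + (logb 2 (logb 2 (exp 1)) + 1 - logb 2 (exp 1)) := by
  have hM1 : (1:ℝ) ≤ (M:ℝ) := by exact_mod_cast Nat.one_le_of_lt hM
  have hM0 : (0:ℝ) < (M:ℝ) := by linarith
  have hlog2 : (0:ℝ) < Real.log 2 := Real.log_pos one_lt_two
  set k : ℕ := ⌈logb 2 (M:ℝ)⌉₊ with hk
  have hlogpos : 0 ≤ logb 2 (M:ℝ) := Real.logb_nonneg one_lt_two hM1
  set t : ℝ := (k:ℝ) - logb 2 (M:ℝ) with ht
  have ht0 : 0 ≤ t := sub_nonneg.2 (Nat.le_ceil _)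
  have ht1 : t ≤ 1 := by
    have := Nat.ceil_lt_add_one hlogpos
    rw [← hk] at this
    simp only [ht]; linarith
  have hdiv : (2:ℝ)^k / (M:ℝ) = (2:ℝ) ^ t := by
    rw [ht, Real.rpow_sub two_pos, Real.rpow_natCast,
      Real.rpow_logb two_pos (by norm_num) hM0]
  have h2t : (2:ℝ) ^ t = Real.exp (t * Real.log 2) := by
    rw [Real.rpow_def_of_pos two_pos, mul_comm]
  -- lower bound : 2^t ≤ 1 + t on [0,1]
  have hlow : (2:ℝ) ^ t ≤ 1 + t := by
    have hconv := convexOn_exp.2 (Set.mem_univ (0:ℝ)) (Set.mem_univ (Real.log 2))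
      (by linarith : (0:ℝ) ≤ 1 - t) ht0 (by ring)
    simp only [smul_eq_mul, mul_zero, zero_add, Real.exp_zero, mul_one,
      Real.exp_log two_pos] at hconv
    rw [h2t]; linarith
  -- upper bound via tangent line at t0
  have hle : logb 2 (Real.exp 1) = 1 / Real.log 2 := by
    simp [Real.logb, Real.log_exp]
  have hinv : (0:ℝ) < 1 / Real.log 2 := by positivity
  set c : ℝ := logb 2 (1 / Real.log 2) with hc
  have h2c : (2:ℝ) ^ c = 1 / Real.log 2 :=
    Real.rpow_logb two_pos (by norm_num) hinv
  have hc2 : Real.exp (c * Real.log 2) = 1 / Real.log 2 := by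
    rw [← h2c, Real.rpow_def_of_pos two_pos, mul_comm]
  have htan : 1 / Real.log 2 * (1 + (t * Real.log 2 - c * Real.log 2)) ≤ (2:ℝ) ^ t := by
    have h1 : (t * Real.log 2 - c * Real.log 2) + 1 ≤ Real.exp (t * Real.log 2 - c * Real.log 2) :=
      Real.add_one_le_exp _
    have h2 : Real.exp (c * Real.log 2) * ((t * Real.log 2 - c * Real.log 2) + 1)
        ≤ Real.exp (c * Real.log 2) * Real.exp (t * Real.log 2 - c * Real.log 2) := by
      apply mul_le_mul_of_nonneg_left h1 (Real.exp_pos _).le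
    rw [← Real.exp_add] at h2
    have : c * Real.log 2 + (t * Real.log 2 - c * Real.log 2) = t * Real.log 2 := by ring
    rw [this] at h2
    rw [h2t, hc2] at *
    nlinarith [h2]
  have hupper : t + 1 - (2:ℝ) ^ t ≤ c + 1 - 1 / Real.log 2 := by
    have hexp : 1 / Real.log 2 + (t - c) ≤ (2:ℝ) ^ t := by
      have := htan
      have hln : (1 / Real.log 2) * Real.log 2 = 1 := by field_simp
      nlinarith [this]
    linarith
  constructor
  · rw [hdiv]; linarith
  · rw [hdiv, hle, ← hc]; linarith
end

section
/- For P ∈ (0,1), the system Q₁+Q₂+Q₃+Q₄+Q₅ = 1, Q₁ = (Q₂+Q₃+Q₄+Q₅)(1−P), Q₂ = Q₁(1−P), Q₃ = (Q₁+Q₂+Q₅)P, Q₄ = Q₃P, Q₅ = Q₄P has the unique solution Q₁ = (1−P)/(2−P), Q₂ = (1−P)²/(2−P), Q₃ = P/(1+P+P²), Q₄ = P²/(1+P+P²), Q₅ = P³/(1+P+P²). -/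
/-! Using the normalization to eliminate the other states, the balance equation of state 1 becomes
`Q₁ = (1 - Q₁)(1 - P)` and, with `Q₄ = Q₃ P`, that of state 3 becomes `Q₃ = (1 - Q₃ - Q₃ P) P`.
Each is a linear equation in one unknown; the remaining states follow by substitution. -/

theorem stmt7_general (P : ℝ) (hP1 : P < 1)
    (Q1 Q2 Q3 Q4 Q5 : ℝ)
    (hsum : Q1 + Q2 + Q3 + Q4 + Q5 = 1)
    (h1 : Q1 = (Q2 + Q3 + Q4 + Q5) * (1 - P))
    (h2 : Q2 = Q1 * (1 - P))
    (h3 : Q3 = (Q1 + Q2 + Q5) * P)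
    (h4 : Q4 = Q3 * P)
    (h5 : Q5 = Q4 * P) :
    Q1 = (1 - P)/(2 - P) ∧ Q2 = (1 - P)^2/(2 - P) ∧
    Q3 = P/(1 + P + P^2) ∧ Q4 = P^2/(1 + P + P^2) ∧ Q5 = P^3/(1 + P + P^2) := by
  have hQ1 : Q1 = (1 - P) / (2 - P) :=
    eq_div_of_mul_eq (by linarith) (by linear_combination h1 + (1 - P) * hsum)
  have hQ3 : Q3 = P / (1 + P + P ^ 2) :=
    eq_div_of_mul_eq (by nlinarith [sq_nonneg (2 * P + 1)])
      (by linear_combination h3 + P * hsum - P * h4)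
  refine ⟨hQ1, ?_, hQ3, ?_, ?_⟩
  · rw [h2, hQ1]; ring
  · rw [h4, hQ3]; ring
  · rw [h5, h4, hQ3]; ring

/-- The stationary distribution of the 5-state Type-II AEDS chain is unique:
the balance equations force the stated closed form. -/
theorem stmt7 (P : ℝ) (hP0 : 0 < P) (hP1 : P < 1)
    (Q1 Q2 Q3 Q4 Q5 : ℝ)
    (hsum : Q1 + Q2 + Q3 + Q4 + Q5 = 1)
    (h1 : Q1 = (Q2 + Q3 + Q4 + Q5) * (1 - P))
    (h2 : Q2 = Q1 * (1 - P))
    (h3 : Q3 = (Q1 + Q2 + Q5) * P)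
    (h4 : Q4 = Q3 * P)
    (h5 : Q5 = Q4 * P) :
    Q1 = (1 - P)/(2 - P) ∧ Q2 = (1 - P)^2/(2 - P) ∧
    Q3 = P/(1 + P + P^2) ∧ Q4 = P^2/(1 + P + P^2) ∧ Q5 = P^3/(1 + P + P^2) :=
  stmt7_general P hP1 Q1 Q2 Q3 Q4 Q5 hsum h1 h2 h3 h4 h5
end

section
/- For P ∈ (ω_II, 1) where ω_II is the real root of P³ − P² + 2P − 1 = 0, the reduction δ_II(P) = (P³ − P² + 2P − 1)/((2 − P)(1 + P + P²)) satisfies δ_II(P) > δ_2(P) = (P² + P − 1)/(1 + P) for all P with ω_II < P < ρ, where ρ ≈ 0.66536 is the unique point in (0.6, 0.7) at which δ_II(ρ) = δ_2(ρ); equivalently δ_II(P) − δ_2(P) changes sign exactly once in (0.6, 0.7). -/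
/-!
Over the common denominator `(2 - P)(1 + P + P²)(1 + P)`, which is positive for `-1 < P < 2`,
the difference `δ_II(P) - δ_2(P)` has numerator `g(P) = P⁵ + P⁴ - 3P³ - P² + 1`. Since
`g'(P) = P(5P³ + 4P² - 9P - 2) < 0` on `(0, 1)`, `g` is strictly decreasing there; as
`g(0.6) > 0 > g(0.7)` it has exactly one root `ρ` in `(0.6, 0.7)`, and `g > 0` on `(0, ρ)`.
-/

open Set

noncomputable def reductionTypeII (P : ℝ) : ℝ :=
  (P^3 - P^2 + 2*P - 1) / ((2 - P) * (1 + P + P^2))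

noncomputable def reductionTwoState (P : ℝ) : ℝ :=
  (P^2 + P - 1) / (1 + P)

def crossingPoly (x : ℝ) : ℝ := x^5 + x^4 - 3*x^3 - x^2 + 1

lemma reductionTypeII_sub_reductionTwoState {x : ℝ} (h₁ : 1 + x ≠ 0) (h₂ : 2 - x ≠ 0) :
    reductionTypeII x - reductionTwoState x =
      crossingPoly x / ((2 - x) * (1 + x + x^2) * (1 + x)) := by
  have h₃ : 1 + x + x^2 ≠ 0 := by nlinarith [sq_nonneg (x + 1/2)]
  unfold reductionTypeII reductionTwoState crossingPoly
  field_simp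
  ring

lemma crossing_denominator_pos {x : ℝ} (h₁ : -1 < x) (h₂ : x < 2) :
    0 < (2 - x) * (1 + x + x^2) * (1 + x) := by
  have : 0 < 1 + x + x^2 := by nlinarith [sq_nonneg (x + 1/2)]
  have : 0 < 2 - x := by linarith
  have : 0 < 1 + x := by linarith
  positivity

lemma reductionTwoState_lt_reductionTypeII_iff {x : ℝ} (h₁ : -1 < x) (h₂ : x < 2) :
    reductionTwoState x < reductionTypeII x ↔ 0 < crossingPoly x := by
  rw [← sub_pos, reductionTypeII_sub_reductionTwoState (by linarith) (by linarith),
    div_pos_iff_of_pos_right (crossing_denominator_pos h₁ h₂)]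

lemma reductionTypeII_eq_reductionTwoState_iff {x : ℝ} (h₁ : -1 < x) (h₂ : x < 2) :
    reductionTypeII x = reductionTwoState x ↔ crossingPoly x = 0 := by
  rw [← sub_eq_zero, reductionTypeII_sub_reductionTwoState (by linarith) (by linarith),
    div_eq_zero_iff, or_iff_left (crossing_denominator_pos h₁ h₂).ne']

lemma hasDerivAt_crossingPoly (x : ℝ) :
    HasDerivAt crossingPoly (5*x^4 + 4*x^3 - 9*x^2 - 2*x) x := by
  have h := ((((hasDerivAt_pow 5 x).add (hasDerivAt_pow 4 x)).sub
    ((hasDerivAt_pow 3 x).const_mul 3)).sub (hasDerivAt_pow 2 x)).add_const 1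
  exact h.congr_deriv (by push_cast; ring)

lemma crossingPoly_strictAntiOn : StrictAntiOn crossingPoly (Icc 0 1) := by
  have hcont : Continuous crossingPoly :=
    continuous_iff_continuousAt.2 fun x => (hasDerivAt_crossingPoly x).continuousAt
  refine strictAntiOn_of_deriv_neg (convex_Icc 0 1) hcont.continuousOn fun x hx => ?_
  rw [interior_Icc] at hx
  obtain ⟨hx₀, hx₁⟩ := hx
  rw [(hasDerivAt_crossingPoly x).deriv]
  have hcubic : 5*x^3 + 4*x^2 - 9*x - 2 < 0 := by
    nlinarith [mul_pos (mul_pos hx₀ hx₀) (sub_pos.2 hx₁), mul_pos hx₀ (sub_pos.2 hx₁)]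
  nlinarith [mul_neg_of_pos_of_neg hx₀ hcubic]

lemma exists_crossingPoly_eq_zero : ∃ ρ ∈ Ioo (0.6 : ℝ) 0.7, crossingPoly ρ = 0 := by
  have hcont : ContinuousOn crossingPoly (Icc 0.6 0.7) :=
    fun x _ => (hasDerivAt_crossingPoly x).continuousAt.continuousWithinAt
  exact intermediate_value_Ioo' (by norm_num) hcont
    ⟨by norm_num [crossingPoly], by norm_num [crossingPoly]⟩

theorem stmt8_general (ω : ℝ) (hω : ω ∈ Set.Ioo (0:ℝ) 1) :
    ∃ ρ ∈ Set.Ioo (0.6:ℝ) 0.7,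
      (ρ^3 - ρ^2 + 2*ρ - 1)/((2 - ρ)*(1 + ρ + ρ^2)) = (ρ^2 + ρ - 1)/(1 + ρ) ∧
      (∀ ρ' ∈ Set.Ioo (0.6:ℝ) 0.7,
        (ρ'^3 - ρ'^2 + 2*ρ' - 1)/((2 - ρ')*(1 + ρ' + ρ'^2)) = (ρ'^2 + ρ' - 1)/(1 + ρ') →
        ρ' = ρ) ∧
      ∀ P : ℝ, ω < P → P < ρ →
        (P^2 + P - 1)/(1 + P) < (P^3 - P^2 + 2*P - 1)/((2 - P)*(1 + P + P^2)) := by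
  obtain ⟨ρ, ⟨hρ₀, hρ₁⟩, hρ⟩ := exists_crossingPoly_eq_zero
  have hρIcc : ρ ∈ Icc (0 : ℝ) 1 := ⟨by linarith, by linarith⟩
  refine ⟨ρ, ⟨hρ₀, hρ₁⟩, ?_, ?_, ?_⟩
  · exact (reductionTypeII_eq_reductionTwoState_iff (x := ρ) (by linarith) (by linarith)).2 hρ
  · rintro ρ' ⟨hρ'₀, hρ'₁⟩ heq
    have hρ' : crossingPoly ρ' = 0 :=
      (reductionTypeII_eq_reductionTwoState_iff (by linarith) (by linarith)).1 heq
    exact crossingPoly_strictAntiOn.injOn ⟨by linarith, by linarith⟩ hρIcc (hρ'.trans hρ.symm)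
  · intro P hωP hPρ
    have hP₀ : 0 < P := hω.1.trans hωP
    refine (reductionTwoState_lt_reductionTypeII_iff (x := P) (by linarith) (by linarith)).2 ?_
    exact hρ ▸ crossingPoly_strictAntiOn ⟨hP₀.le, by linarith⟩ hρIcc hPρ

/-- Comparison of the Type-II and Type-I (2-state) reductions: there is a unique
crossing point `ρ ∈ (0.6, 0.7)` of `δ_II` and `δ_2`, and `δ_II(P) > δ_2(P)` for
`ω_II < P < ρ`, where `ω_II` is the real root of `P³ - P² + 2P - 1`. -/
theorem stmt8 (ω : ℝ) (hω : ω ∈ Set.Ioo (0:ℝ) 1)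
    (hroot : ω^3 - ω^2 + 2*ω - 1 = 0) :
    ∃ ρ ∈ Set.Ioo (0.6:ℝ) 0.7,
      (ρ^3 - ρ^2 + 2*ρ - 1)/((2 - ρ)*(1 + ρ + ρ^2)) = (ρ^2 + ρ - 1)/(1 + ρ) ∧
      (∀ ρ' ∈ Set.Ioo (0.6:ℝ) 0.7,
        (ρ'^3 - ρ'^2 + 2*ρ' - 1)/((2 - ρ')*(1 + ρ' + ρ'^2)) = (ρ'^2 + ρ' - 1)/(1 + ρ') →
        ρ' = ρ) ∧
      ∀ P : ℝ, ω < P → P < ρ →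
        (P^2 + P - 1)/(1 + P) < (P^3 - P^2 + 2*P - 1)/((2 - P)*(1 + P + P^2)) :=
  stmt8_general ω hω
end

section
/- As P → 1⁻, the limit of the Type-I worst-case redundancy μ_N(P) = 2 − P − h(P) − δ_N(P) equals 1/N, where h is the binary entropy function, δ_N(P) = (1 − P^{N−1})/(1 − P^N)·P − k(1−P) + (1 − P^{2^k−N})/(1 − P^N)·(1−P), and k = ⌈lg N⌉. -/
/-!
Both ratios `(1 - P^j)/(1 - P^N)` cancel the factor `1 - P` to become ratios of geometric sums,
which are continuous at `P = 1` with value `j/N`, and the binary entropy is continuous with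
`h(1) = 0`. Hence the redundancy tends to `2 - 1 - 0 - (N - 1)/N = 1/N`.
-/

open Real Filter Topology Finset

lemma neg_mul_logb_sub_mul_logb_eq_binEntropy_div (b p : ℝ) :
    -p * logb b p - (1 - p) * logb b (1 - p) = binEntropy p / log b := by
  simp only [binEntropy, logb, log_inv]
  ring

lemma tendsto_one_sub_pow_div_one_sub_pow {𝕜 : Type*} [NormedField 𝕜] [CharZero 𝕜]
    (j : ℕ) {n : ℕ} (hn : n ≠ 0) :
    Tendsto (fun x : 𝕜 => (1 - x ^ j) / (1 - x ^ n)) (𝓝[≠] 1) (𝓝 (j / n)) := by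
  have hgeom :
      ContinuousAt (fun x : 𝕜 => (∑ i ∈ range j, x ^ i) / ∑ i ∈ range n, x ^ i) 1 := by
    fun_prop (disch := simp [hn])
  have hlim : Tendsto (fun x : 𝕜 => (∑ i ∈ range j, x ^ i) / ∑ i ∈ range n, x ^ i)
      (𝓝[≠] 1) (𝓝 (j / n)) := by
    simpa using hgeom.tendsto.mono_left nhdsWithin_le_nhds
  refine hlim.congr' ?_
  filter_upwards [self_mem_nhdsWithin] with x hx
  rw [← geom_sum_mul_neg x j, ← geom_sum_mul_neg x n,
    mul_div_mul_right _ _ (sub_ne_zero.mpr (Ne.symm hx))]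

/-- As `P → 1⁻`, the Type-I worst-case redundancy `μ_N(P) = 2 - P - h(P) - δ_N(P)`
tends to `1/N`. -/
theorem stmt9 (N : ℕ) (hN : 2 ≤ N) :
    Tendsto (fun P : ℝ =>
        2 - P - (-P * logb 2 P - (1 - P) * logb 2 (1 - P))
        - ((1 - P^(N-1)) / (1 - P^N) * P
            - (⌈logb 2 (N:ℝ)⌉₊ : ℝ) * (1 - P)
            + (1 - P^(2^(⌈logb 2 (N:ℝ)⌉₊) - N)) / (1 - P^N) * (1 - P)))
      (nhdsWithin 1 (Set.Iio 1)) (nhds (1/(N:ℝ))) := by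
  set k := ⌈logb 2 (N:ℝ)⌉₊
  have hN0 : N ≠ 0 := by omega
  have hleft : 𝓝[<] (1:ℝ) ≤ 𝓝[≠] 1 := nhdsWithin_mono _ fun _ hx => ne_of_lt hx
  have hq₁ := (tendsto_one_sub_pow_div_one_sub_pow (N - 1) hN0).mono_left hleft
  have hq₂ := (tendsto_one_sub_pow_div_one_sub_pow (2 ^ k - N) hN0).mono_left hleft
  have hP : Tendsto (fun P : ℝ => P) (𝓝[<] 1) (𝓝 1) :=
    tendsto_nhdsWithin_of_tendsto_nhds tendsto_id
  have hQ : Tendsto (fun P : ℝ => 1 - P) (𝓝[<] 1) (𝓝 (1 - 1)) := tendsto_const_nhds.sub hP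
  have hH : Tendsto (fun P : ℝ => -P * logb 2 P - (1 - P) * logb 2 (1 - P)) (𝓝[<] 1)
      (𝓝 (binEntropy 1 / log 2)) := by
    simp only [neg_mul_logb_sub_mul_logb_eq_binEntropy_div]
    exact (binEntropy_continuous.tendsto 1).mono_left nhdsWithin_le_nhds |>.div_const _
  convert ((tendsto_const_nhds.sub hP).sub hH).sub
    (((hq₁.mul hP).sub (tendsto_const_nhds.mul hQ)).add (hq₂.mul hQ)) using 2
  rw [binEntropy_one, Nat.cast_sub (by omega : 1 ≤ N)]
  field_simp
  ring
end

section
/- Suppose for each symbol s in a finite alphabet S with probabilities p(s) > 0 summing to 1, and positive integers N_s with Σ N_s = N, the stationary state distribution satisfies Q(i) = Q*(i) = lg((N+i)/(N+i−1)) for all states i. Then the average code length L = Σ_s p(s)(κ_s − 1 + \tilde{Q}_s), with κ_s = ⌈lg(N/N_s)⌉ and \tilde{Q}_s = Σ_{i=2^{κ_s}N_s−N+1}^N Q*(i), equals H(p) + D(p‖q) where q(s) = N_s/N, H(p) = −Σ p(s) lg p(s), and D(p‖q) = Σ p(s) lg(p(s)/q(s)). -/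
/-!
The stationary probabilities `Q*(i) = lg((N+i)/(N+i-1))` telescope, so
`Q̃_s = lg(2N) - lg(2^κ N_s)`. The choice `κ = ⌈lg(N/N_s)⌉` gives `N ≤ 2^κ N_s < 2N`, which makes
the summation range `(2^κ N_s - N, N]` a genuine interval of positive states. Hence the cost of
`s` is `κ - 1 + Q̃_s = lg(N/N_s)`, and averaging over `p` gives the cross entropy
`-Σ p(s) lg q(s) = H(p) + D(p‖q)`.
-/

open Real Finset

theorem sum_Icc_logb_div_sub_one (b M : ℝ) {m n : ℕ} (hm : 0 < M + m) (hmn : m ≤ n) :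
    ∑ i ∈ Icc (m + 1) n, logb b ((M + i) / (M + i - 1)) = logb b (M + n) - logb b (M + m) := by
  induction n, hmn using Nat.le_induction with
  | base => simp
  | succ n hmn ih =>
    have hn : 0 < M + n := hm.trans_le (by gcongr)
    rw [sum_Icc_succ_top (by omega), ih, Nat.cast_succ, show M + (n + 1) - 1 = M + n by ring,
      logb_div (by linarith : 0 < M + (n + 1)).ne' hn.ne']
    ring

theorem le_rpow_natCeil_logb {b y : ℝ} (hb : 1 < b) (hy : 0 < y) : y ≤ b ^ ⌈logb b y⌉₊ := by
  calc y = b ^ logb b y := (rpow_logb (by positivity) hb.ne' hy).symm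
    _ ≤ b ^ (⌈logb b y⌉₊ : ℝ) := rpow_le_rpow_of_exponent_le hb.le (Nat.le_ceil _)
    _ = b ^ ⌈logb b y⌉₊ := rpow_natCast b _

theorem rpow_natCeil_logb_lt {b y : ℝ} (hb : 1 < b) (hy : 1 ≤ y) : b ^ ⌈logb b y⌉₊ < b * y := by
  have hceil : (⌈logb b y⌉₊ : ℝ) < logb b y + 1 := Nat.ceil_lt_add_one (logb_nonneg hb hy)
  calc b ^ ⌈logb b y⌉₊ = b ^ (⌈logb b y⌉₊ : ℝ) := (rpow_natCast b _).symm
    _ < b ^ (logb b y + 1) := rpow_lt_rpow_of_exponent_lt hb hceil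
    _ = b * y := by
      rw [rpow_add (by positivity), rpow_logb (by positivity) hb.ne' (by positivity), rpow_one,
        mul_comm]

theorem natCeil_logb_sub_one_add_sum_Icc_logb {N n : ℕ} (hn : 1 ≤ n) (hnN : n ≤ N) :
    (⌈logb 2 ((N : ℝ) / n)⌉₊ : ℝ) - 1 +
        ∑ i ∈ Icc (2 ^ ⌈logb 2 ((N : ℝ) / n)⌉₊ * n - N + 1) N,
          logb 2 (((N : ℝ) + i) / ((N : ℝ) + i - 1))
      = logb 2 ((N : ℝ) / n) := by
  set κ := ⌈logb 2 ((N : ℝ) / n)⌉₊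
  have hn₀ : (0 : ℝ) < n := by exact_mod_cast hn
  have hN₀ : (0 : ℝ) < N := by exact_mod_cast hn.trans hnN
  have hratio : 1 ≤ (N : ℝ) / n := (one_le_div hn₀).mpr (by exact_mod_cast hnN)
  have hlower : N ≤ 2 ^ κ * n := by
    have := le_rpow_natCeil_logb one_lt_two (div_pos hN₀ hn₀)
    rw [div_le_iff₀ hn₀] at this
    exact_mod_cast this
  have hupper : 2 ^ κ * n < 2 * N := by
    have := rpow_natCeil_logb_lt one_lt_two hratio
    rw [← mul_div_assoc, lt_div_iff₀ hn₀] at this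
    exact_mod_cast this
  have hstart : (N : ℝ) + ((2 ^ κ * n - N : ℕ) : ℝ) = 2 ^ κ * n := by
    rw [Nat.cast_sub hlower]; push_cast; ring
  rw [sum_Icc_logb_div_sub_one 2 (N : ℝ) (by rw [hstart]; positivity) (by omega), hstart,
    ← two_mul, logb_mul two_ne_zero hN₀.ne', logb_mul (by positivity) hn₀.ne', logb_pow,
    logb_self_eq_one one_lt_two, logb_div hN₀.ne' hn₀.ne']
  ring

theorem stmt13_general {S : Type*} [Fintype S] (p : S → ℝ) (hp : ∀ s, 0 < p s)
    (Ns : S → ℕ) (hNs : ∀ s, 1 ≤ Ns s)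
    (N : ℕ) (hN : N = ∑ s, Ns s)
    (κ : S → ℕ) (hκ : ∀ s, κ s = ⌈logb 2 ((N:ℝ)/(Ns s:ℝ))⌉₊) :
    ∑ s, p s * ((κ s : ℝ) - 1 +
        ∑ i ∈ Finset.Icc (2^(κ s) * Ns s - N + 1) N,
          logb 2 (((N:ℝ) + i)/((N:ℝ) + i - 1)))
    = (-∑ s, p s * logb 2 (p s)) + ∑ s, p s * logb 2 (p s / ((Ns s : ℝ)/(N:ℝ))) := by
  rw [← sum_neg_distrib, ← sum_add_distrib]
  refine sum_congr rfl fun s _ => ?_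
  have hNs_le : Ns s ≤ N := hN ▸ single_le_sum (fun _ _ => Nat.zero_le _) (mem_univ s)
  have hNs₀ : (0 : ℝ) < Ns s := by exact_mod_cast hNs s
  have hN₀ : (0 : ℝ) < N := hNs₀.trans_le (by exact_mod_cast hNs_le)
  rw [hκ s, natCeil_logb_sub_one_add_sum_Icc_logb (hNs s) hNs_le,
    logb_div (hp s).ne' (by positivity), logb_div hNs₀.ne' hN₀.ne', logb_div hN₀.ne' hNs₀.ne']
  ring

/-- Lemma 1: under the optimal stationary distribution `Q*`, the average code length
`L = Σ_s p(s)(κ_s - 1 + Q̃_s)` equals `H(p) + D(p‖q)` with `q(s) = N_s/N`. -/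
theorem stmt13 {S : Type*} [Fintype S] (p : S → ℝ) (hp : ∀ s, 0 < p s)
    (hsum : ∑ s, p s = 1) (Ns : S → ℕ) (hNs : ∀ s, 1 ≤ Ns s)
    (N : ℕ) (hN : N = ∑ s, Ns s)
    (κ : S → ℕ) (hκ : ∀ s, κ s = ⌈logb 2 ((N:ℝ)/(Ns s:ℝ))⌉₊) :
    ∑ s, p s * ((κ s : ℝ) - 1 +
        ∑ i ∈ Finset.Icc (2^(κ s) * Ns s - N + 1) N,
          logb 2 (((N:ℝ) + i)/((N:ℝ) + i - 1)))
    = (-∑ s, p s * logb 2 (p s)) + ∑ s, p s * logb 2 (p s / ((Ns s : ℝ)/(N:ℝ))) :=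
  stmt13_general p hp Ns hNs N hN κ hκ
end

section
/- Let N ≥ 1 and η > 0. If numbers Q(i) satisfy Q(i) < Q*(i) + η/N² for all i = 1,…,N with Q*(i) = lg((N+i)/(N+i−1)), then for any κ_s = ⌈lg(N/N_s)⌉ (with N_s ≤ N) the tail sum Σ_{i=2^{κ_s}N_s−N+1}^N Q(i) is less than (1 − κ_s + lg(N/N_s)) + η/N; consequently, the average code length L = Σ_s p(s)(κ_s − 1 + \tilde{Q}_s) satisfies L < H(p) + D(p‖q) + η/N. -/
/-!
The optimal lengths `Q*(i) = lg((N+i)/(N+i-1))` telescope, so the optimal tail starting at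
`K - N + 1`, where `K = 2^κ N_s`, sums to `lg(2N/K) = 1 - κ + lg(N/N_s)`; the choice of `κ` as
a ceiling gives `N ≤ K < 2N`, so the tail is nonempty and has at most `N` terms, each exceeding
its optimum by less than `η/N²`. Averaging against `p`, `lg(N/N_s) = lg(1/q(s))` splits into
entropy plus relative entropy.
-/

open Real Finset

namespace Real

variable {b x : ℝ}

lemma le_pow_natCeil_logb (hb : 1 < b) (hx : 0 < x) : x ≤ b ^ ⌈logb b x⌉₊ := by
  rw [← rpow_natCast, ← logb_le_iff_le_rpow hb hx]
  exact Nat.le_ceil _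

lemma pow_natCeil_logb_lt (hb : 1 < b) (hx : 1 ≤ x) : b ^ ⌈logb b x⌉₊ < b * x := by
  have hlog : 0 ≤ logb b x := logb_nonneg hb hx
  calc b ^ ⌈logb b x⌉₊ = b ^ (⌈logb b x⌉₊ : ℝ) := (rpow_natCast _ _).symm
    _ < b ^ (logb b x + 1) := rpow_lt_rpow_of_exponent_lt hb (Nat.ceil_lt_add_one hlog)
    _ = b * x := by
        rw [rpow_add_one (by positivity), rpow_logb (by positivity) hb.ne' (by positivity),
          mul_comm]

end Real

lemma sum_Icc_logb_add_div_add_sub_one (b : ℝ) {c : ℝ} (hc : 0 < c) {m n : ℕ} (hmn : m ≤ n) :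
    ∑ i ∈ Icc (m + 1) n, logb b ((c + i) / (c + i - 1)) = logb b (c + n) - logb b (c + m) := by
  induction n, hmn using Nat.le_induction with
  | base => simp
  | succ n hmn ih =>
    have hsub : c + ((n + 1 : ℕ) : ℝ) - 1 = c + n := by push_cast; ring
    rw [sum_Icc_succ_top (by omega), ih, hsub, logb_div (by positivity) (by positivity)]
    ring

lemma sum_Icc_lt_logb_sub_add (b : ℝ) {N m : ℕ} (hN : 0 < N) (hmN : m < N) {η : ℝ} (hη : 0 ≤ η)
    {Q : ℕ → ℝ} (hQ : ∀ i ∈ Icc 1 N, Q i < logb b ((N + i) / (N + i - 1)) + η / (N : ℝ) ^ 2) :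
    ∑ i ∈ Icc (m + 1) N, Q i < logb b ((N : ℝ) + N) - logb b ((N : ℝ) + m) + η / N := by
  have hNpos : (0 : ℝ) < N := by exact_mod_cast hN
  have hcard : ((N - m : ℕ) : ℝ) ≤ N := by exact_mod_cast Nat.sub_le N m
  calc ∑ i ∈ Icc (m + 1) N, Q i
      < ∑ i ∈ Icc (m + 1) N, (logb b ((N + i) / (N + i - 1)) + η / (N : ℝ) ^ 2) :=
        sum_lt_sum_of_nonempty ⟨N, by simp only [mem_Icc]; omega⟩
          fun i hi ↦ hQ i (by simp only [mem_Icc] at hi ⊢; omega)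
    _ = logb b ((N : ℝ) + N) - logb b ((N : ℝ) + m) + (N - m : ℕ) * (η / (N : ℝ) ^ 2) := by
        rw [sum_add_distrib, sum_Icc_logb_add_div_add_sub_one b hNpos hmN.le, sum_const,
          Nat.card_Icc, nsmul_eq_mul, Nat.add_sub_add_right]
    _ ≤ logb b ((N : ℝ) + N) - logb b ((N : ℝ) + m) + N * (η / (N : ℝ) ^ 2) := by gcongr
    _ = logb b ((N : ℝ) + N) - logb b ((N : ℝ) + m) + η / N := by field_simp

lemma sum_Icc_tail_lt {N n : ℕ} (hn : 0 < n) (hnN : n ≤ N) {η : ℝ} (hη : 0 ≤ η) {Q : ℕ → ℝ}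
    (hQ : ∀ i ∈ Icc 1 N, Q i < logb 2 ((N + i) / (N + i - 1)) + η / (N : ℝ) ^ 2) :
    ∑ i ∈ Icc (2 ^ ⌈logb 2 ((N : ℝ) / n)⌉₊ * n - N + 1) N, Q i
      < 1 - (⌈logb 2 ((N : ℝ) / n)⌉₊ : ℝ) + logb 2 ((N : ℝ) / n) + η / N := by
  set κ := ⌈logb 2 ((N : ℝ) / n)⌉₊
  have hnpos : (0 : ℝ) < n := by exact_mod_cast hn
  have hNpos : (0 : ℝ) < N := hnpos.trans_le (by exact_mod_cast hnN)
  have hx : 1 ≤ (N : ℝ) / n := by rw [one_le_div hnpos]; exact_mod_cast hnN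
  have hle : N ≤ 2 ^ κ * n := by
    have := Real.le_pow_natCeil_logb one_lt_two (div_pos hNpos hnpos)
    rw [div_le_iff₀ hnpos] at this
    exact_mod_cast this
  have hlt : 2 ^ κ * n < 2 * N := by
    have := Real.pow_natCeil_logb_lt one_lt_two hx
    rw [← mul_div_assoc, lt_div_iff₀ hnpos] at this
    exact_mod_cast this
  have hK : ((N : ℝ) + (2 ^ κ * n - N : ℕ)) = 2 ^ κ * n := by
    rw [Nat.cast_sub hle]; push_cast; ring
  calc ∑ i ∈ Icc (2 ^ κ * n - N + 1) N, Q i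
      < logb 2 ((N : ℝ) + N) - logb 2 ((N : ℝ) + (2 ^ κ * n - N : ℕ)) + η / N :=
        sum_Icc_lt_logb_sub_add 2 (by omega) (by omega) hη hQ
    _ = 1 - (κ : ℝ) + logb 2 ((N : ℝ) / n) + η / N := by
        rw [hK, ← two_mul, logb_mul two_ne_zero hNpos.ne', logb_mul (by positivity) hnpos.ne',
          logb_pow, logb_self_eq_one one_lt_two, logb_div hNpos.ne' hnpos.ne']
        ring

lemma neg_sum_mul_logb_add_sum_mul_logb_div {ι : Type*} (s : Finset ι) (b : ℝ) {p q : ι → ℝ}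
    (hp : ∀ i ∈ s, p i ≠ 0) (hq : ∀ i ∈ s, q i ≠ 0) :
    -∑ i ∈ s, p i * logb b (p i) + ∑ i ∈ s, p i * logb b (p i / q i)
      = ∑ i ∈ s, p i * logb b (q i)⁻¹ := by
  rw [← sum_neg_distrib, ← sum_add_distrib]
  refine sum_congr rfl fun i hi ↦ ?_
  rw [logb_div (hp i hi) (hq i hi), logb_inv]
  ring

theorem stmt14_general {S : Type*} [Fintype S] (p : S → ℝ) (hp : ∀ s, 0 < p s)
    (hsum : ∑ s, p s = 1) (Ns : S → ℕ) (hNs : ∀ s, 1 ≤ Ns s)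
    (N : ℕ) (hN : N = ∑ s, Ns s)
    (κ : S → ℕ) (hκ : ∀ s, κ s = ⌈logb 2 ((N:ℝ)/(Ns s:ℝ))⌉₊)
    (η : ℝ) (hη : 0 < η) (Q : ℕ → ℝ)
    (hQ : ∀ i ∈ Finset.Icc 1 N,
      Q i < logb 2 (((N:ℝ) + i)/((N:ℝ) + i - 1)) + η/(N:ℝ)^2) :
    (∀ s : S, ∑ i ∈ Finset.Icc (2^(κ s) * Ns s - N + 1) N, Q i
        < (1 - (κ s : ℝ) + logb 2 ((N:ℝ)/(Ns s:ℝ))) + η/(N:ℝ)) ∧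
    ∑ s, p s * ((κ s : ℝ) - 1 + ∑ i ∈ Finset.Icc (2^(κ s) * Ns s - N + 1) N, Q i)
      < (-∑ s, p s * logb 2 (p s)) + (∑ s, p s * logb 2 (p s / ((Ns s : ℝ)/(N:ℝ))))
        + η/(N:ℝ) := by
  have hNs_le (s : S) : Ns s ≤ N := hN ▸ single_le_sum (fun _ _ ↦ Nat.zero_le _) (mem_univ s)
  have htail (s : S) : ∑ i ∈ Icc (2 ^ κ s * Ns s - N + 1) N, Q i
      < 1 - (κ s : ℝ) + logb 2 ((N : ℝ) / Ns s) + η / N := by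
    rw [hκ s]
    exact sum_Icc_tail_lt (hNs s) (hNs_le s) hη.le hQ
  refine ⟨htail, ?_⟩
  have hS : (univ : Finset S).Nonempty := nonempty_of_sum_ne_zero (by rw [hsum]; exact one_ne_zero)
  calc ∑ s, p s * ((κ s : ℝ) - 1 + ∑ i ∈ Icc (2 ^ κ s * Ns s - N + 1) N, Q i)
      < ∑ s, p s * (logb 2 (((Ns s : ℝ) / N)⁻¹) + η / N) :=
        sum_lt_sum_of_nonempty hS fun s _ ↦
          mul_lt_mul_of_pos_left (by rw [inv_div]; linarith [htail s]) (hp s)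
    _ = ∑ s, p s * logb 2 (((Ns s : ℝ) / N)⁻¹) + η / N := by
        simp only [mul_add, sum_add_distrib, ← sum_mul, hsum, one_mul]
    _ = _ := by
        have hq (s : S) : ((Ns s : ℝ) / N) ≠ 0 := by
          have : (0 : ℝ) < Ns s := by exact_mod_cast hNs s
          exact (div_pos this (this.trans_le (by exact_mod_cast hNs_le s))).ne'
        rw [neg_sum_mul_logb_add_sum_mul_logb_div _ _ (fun s _ ↦ (hp s).ne') (fun s _ ↦ hq s)]

/-- Lemma 2 (case (26)): if `Q(i) < Q*(i) + η/N²` for all states, then each tail sum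
exceeds the optimal tail mass by less than `η/N`, and the average code length
satisfies `L < H(p) + D(p‖q) + η/N`. -/
theorem stmt14 {S : Type*} [Fintype S] (p : S → ℝ) (hp : ∀ s, 0 < p s)
    (hsum : ∑ s, p s = 1) (Ns : S → ℕ) (hNs : ∀ s, 1 ≤ Ns s)
    (N : ℕ) (hN : N = ∑ s, Ns s) (hN1 : 1 ≤ N)
    (κ : S → ℕ) (hκ : ∀ s, κ s = ⌈logb 2 ((N:ℝ)/(Ns s:ℝ))⌉₊)
    (η : ℝ) (hη : 0 < η) (Q : ℕ → ℝ)
    (hQ : ∀ i ∈ Finset.Icc 1 N,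
      Q i < logb 2 (((N:ℝ) + i)/((N:ℝ) + i - 1)) + η/(N:ℝ)^2) :
    (∀ s : S, ∑ i ∈ Finset.Icc (2^(κ s) * Ns s - N + 1) N, Q i
        < (1 - (κ s : ℝ) + logb 2 ((N:ℝ)/(Ns s:ℝ))) + η/(N:ℝ)) ∧
    ∑ s, p s * ((κ s : ℝ) - 1 + ∑ i ∈ Finset.Icc (2^(κ s) * Ns s - N + 1) N, Q i)
      < (-∑ s, p s * logb 2 (p s)) + (∑ s, p s * logb 2 (p s / ((Ns s : ℝ)/(N:ℝ))))
        + η/(N:ℝ) :=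
  stmt14_general p hp hsum Ns hNs N hN κ hκ η hη Q hQ
end

section
/- For N ≥ 1 and 1 ≤ i ≤ N, define Q°(i) = θ/(N+i−1) where θ > 0 is chosen so Σ_{i=1}^N Q°(i) = 1. Then θ < lg e, and Q°(i) < lg((N+i)/(N+i−1)) + (lg e)/(2N²) for all i. -/
/-!
With `H = ∑_{j<N} 1/(N+j)` the normalization reads `θ = 1/H`, and `H > ln 2` because each term
`1/(N+j)` exceeds `ln (N+j+1) - ln (N+j)`, which telescope to `ln 2`; hence `θ < lg e`. For
`m = N+i-1 ≥ N` the bound `ln (1 + 1/m) ≥ 1/m - 1/(2m²)` then gives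
`Q°(i) = θ/m < (lg e)/m ≤ lg ((m+1)/m) + (lg e)/(2m²) ≤ Q*(i) + (lg e)/(2N²)`.
-/

open Real Finset

lemma log_add_one_sub_log_lt_inv {m : ℝ} (hm : 0 < m) : log (m + 1) - log m < m⁻¹ := by
  rw [← log_div (by positivity) hm.ne']
  calc log ((m + 1) / m) < (m + 1) / m - 1 :=
        log_lt_sub_one_of_pos (by positivity) (by rw [Ne, div_eq_one_iff_eq hm.ne']; linarith)
    _ = m⁻¹ := by field_simp; ring

lemma log_add_div_lt_sum_inv {a : ℝ} (ha : 0 < a) {n : ℕ} (hn : n ≠ 0) :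
    log ((a + n) / a) < ∑ j ∈ range n, (a + j)⁻¹ := by
  have htelescope : log ((a + n) / a) = ∑ j ∈ range n, (log (a + j + 1) - log (a + j)) := by
    rw [log_div (by positivity) ha.ne']
    simpa [add_assoc] using (sum_range_sub (fun j : ℕ => log (a + j)) n).symm
  rw [htelescope]
  exact sum_lt_sum_of_nonempty (nonempty_range_iff.mpr hn)
    fun j _ => log_add_one_sub_log_lt_inv (by positivity)

lemma inv_sub_inv_two_mul_sq_le_log_add_one_div {m : ℝ} (hm : 0 < m) :
    m⁻¹ - (2 * m ^ 2)⁻¹ ≤ log ((m + 1) / m) := by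
  have hpade := le_log_one_add_of_nonneg (inv_pos.mpr hm).le
  rw [show 1 + m⁻¹ = (m + 1) / m by field_simp,
    show 2 * m⁻¹ / (m⁻¹ + 2) = 2 / (2 * m + 1) by field_simp; ring] at hpade
  refine le_trans ?_ hpade
  have hgap : 2 / (2 * m + 1) - (m⁻¹ - (2 * m ^ 2)⁻¹) = (2 * m ^ 2 * (2 * m + 1))⁻¹ := by
    field_simp; ring
  rw [← sub_nonneg, hgap]
  positivity

theorem stmt15_general (N : ℕ) (hN : 1 ≤ N) (θ : ℝ)
    (hnorm : ∑ i ∈ Finset.Icc 1 N, θ/((N:ℝ) + i - 1) = 1) :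
    θ < logb 2 (exp 1) ∧
    ∀ i ∈ Finset.Icc 1 N,
      θ/((N:ℝ) + i - 1)
        < logb 2 (((N:ℝ) + i)/((N:ℝ) + i - 1)) + logb 2 (exp 1)/(2*(N:ℝ)^2) := by
  have hlog2 : 0 < log 2 := log_pos one_lt_two
  have hlge : logb 2 (exp 1) = (log 2)⁻¹ := by rw [logb, log_exp, one_div]
  have hN0 : (0 : ℝ) < N := by exact_mod_cast hN
  have hθH : θ * ∑ j ∈ range N, ((N : ℝ) + j)⁻¹ = 1 := by
    rw [← hnorm, ← Ico_add_one_right_eq_Icc, sum_Ico_eq_sum_range, mul_sum, Nat.add_sub_cancel]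
    exact sum_congr rfl fun j _ => by push_cast; ring
  have hH : log 2 < ∑ j ∈ range N, ((N : ℝ) + j)⁻¹ := by
    simpa [← two_mul, hN0.ne'] using log_add_div_lt_sum_inv hN0 (n := N) (by omega)
  have hθ : θ < (log 2)⁻¹ := by
    rw [eq_inv_of_mul_eq_one_left hθH]
    exact inv_strictAnti₀ hlog2 hH
  refine ⟨hlge ▸ hθ, fun i hi => ?_⟩
  have hi1 : (1 : ℝ) ≤ i := by exact_mod_cast (mem_Icc.mp hi).1
  set m := (N : ℝ) + i - 1
  have hNm : (N : ℝ) ≤ m := by linarith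
  have hm : 0 < m := by linarith
  rw [show (N : ℝ) + i = m + 1 by ring, hlge, logb]
  calc θ / m < (log 2)⁻¹ / m := by gcongr
    _ = m⁻¹ / log 2 := by ring
    _ ≤ (log ((m + 1) / m) + (2 * m ^ 2)⁻¹) / log 2 := by
        gcongr; linarith [inv_sub_inv_two_mul_sq_le_log_add_one_div hm]
    _ ≤ (log ((m + 1) / m) + (2 * (N : ℝ) ^ 2)⁻¹) / log 2 := by gcongr
    _ = log ((m + 1) / m) / log 2 + (log 2)⁻¹ / (2 * (N : ℝ) ^ 2) := by ring

/-- Lemma 3: if `Q°(i) = θ/(N+i-1)` is normalized to sum to 1, then `θ < lg e` and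
`Q°(i) < Q*(i) + (lg e)/(2N²)` for all `i`. -/
theorem stmt15 (N : ℕ) (hN : 1 ≤ N) (θ : ℝ) (hθ : 0 < θ)
    (hnorm : ∑ i ∈ Finset.Icc 1 N, θ/((N:ℝ) + i - 1) = 1) :
    θ < logb 2 (exp 1) ∧
    ∀ i ∈ Finset.Icc 1 N,
      θ/((N:ℝ) + i - 1)
        < logb 2 (((N:ℝ) + i)/((N:ℝ) + i - 1)) + logb 2 (exp 1)/(2*(N:ℝ)^2) :=
  stmt15_general N hN θ hnorm
end
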